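/- (Proposition 4.2) Let n ≥ 2 and c ≥ 1. If (A₁,A₂;C₁,…,C_n;e;f₁,…,f_{n−1}) is a θ_c-semistable (c,c)-dimensional framed representation of Λ_n, then the pair (A₁,A₂) is a θ_c-semistable (c,c)-dimensional representation of the Kronecker quiver Q_K; that is, for every pair of subspaces S₀ ⊆ V₀, S₁ ⊆ V₁ with A₁(S₀) ⊆ S₁ and A₂(S₀) ⊆ S₁, with (S₀,S₁) ≠ (0,0) and (S₀,S₁) ≠ (V₀,V₁), one has (2c·dim S₀ + (1−2c)·dim S₁)/(dim S₀ + dim S₁) ≤ 1/2. -/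

import Mathlib

/-!
The slope inequality says `dim S₀ ≤ dim S₁`. Semistability gives `dim T₀ ≤ dim T₁` for every
subrepresentation `(T₀, T₁)` of `(A₁, A₂; C)`: if `T₀ ⊄ ker e`, then `e(T₀) = W` and the
relations force `Im f_q ⊆ T₀`.

Suppose a Kronecker subrepresentation has `dim S₀ > dim S₁`. Then the pencil `A₂ + t A₁` has a
nonzero polynomial kernel vector `x(t)` and, as `dim V₀ = dim V₁`, so does its transpose, say
`φ(t)`; take both of minimal degree. If `e x(t) = 0`, the relations make `C_n A₁ x(t)` a kernel
vector of smaller degree, hence zero, and then every `C_q` kills `A₂ (span x)`, so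
`(span x, A₂ (span x))` violates the inequality. Otherwise the relations give
`φ(t) A₁ f_q e x(t) = 0` for all `t`, and since `W` is a line, `φ(t) ∘ A₁ ∘ f_q = 0`. This is what
the same argument needs for the transposed pencil, and the coannihilators of `A₂ᵀ (span φ)` and
`span φ` then violate the inequality.
-/

open Module Submodule Polynomial

variable {K : Type*} [Field K]

section Pencil

variable {M N : Type*} [AddCommGroup M] [Module K M] [AddCommGroup N] [Module K N]

def evalCoeffs (v : ℕ → M) (d : ℕ) (t : K) : M :=
  ∑ k ∈ Finset.range d, t ^ k • v k

@[simp]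
theorem map_evalCoeffs (g : M →ₗ[K] N) (v : ℕ → M) (d : ℕ) (t : K) :
    g (evalCoeffs v d t) = evalCoeffs (fun k ↦ g (v k)) d t := by
  simp [evalCoeffs]

theorem eq_zero_of_infinite_evalCoeffs_eq_zero {v : ℕ → M} {d : ℕ} (hv : ∀ k, d ≤ k → v k = 0)
    (h : {t : K | evalCoeffs v d t = 0}.Infinite) : v = 0 := by
  funext k
  by_cases hk : d ≤ k
  · exact hv k hk
  rw [Pi.zero_apply, ← forall_dual_apply_eq_zero_iff K]
  intro ψ
  set p : K[X] := ∑ j ∈ Finset.range d, C (ψ (v j)) * X ^ j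
  have hp : p = 0 := by
    refine eq_zero_of_infinite_isRoot p (h.mono fun t ht ↦ ?_)
    have : ψ (evalCoeffs v d t) = 0 := by rw [ht, map_zero]
    simp only [evalCoeffs, map_sum, map_smul, smul_eq_mul] at this
    simp only [p, IsRoot, eval_finsetSum, eval_mul, eval_C, eval_pow, eval_X, Set.mem_ofPred_eq]
    rw [← this]
    exact Finset.sum_congr rfl fun j _ ↦ mul_comm _ _
  simpa [p, finsetSum_coeff, coeff_C_mul_X_pow, show k < d by omega] using congr(coeff $hp k)

/-- `v` lists the coefficients of a polynomial `x(t) = ∑_{k<d} tᵏ vₖ` with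
`(a₂ + t a₁) x(t) = 0`. -/
structure IsPencilKernel (a₁ a₂ : M →ₗ[K] N) (v : ℕ → M) (d : ℕ) : Prop where
  apply_zero : a₂ (v 0) = 0
  apply_succ : ∀ k, a₂ (v (k + 1)) = -a₁ (v k)
  eq_zero_of_le : ∀ k, d ≤ k → v k = 0

namespace IsPencilKernel

variable {a₁ a₂ : M →ₗ[K] N} {v : ℕ → M} {d : ℕ}

theorem apply_fst_eq_zero (h : IsPencilKernel a₁ a₂ v d) {k : ℕ} (hk : d ≤ k + 1) :
    a₁ (v k) = 0 := by
  rw [← neg_eq_zero, ← h.apply_succ, h.eq_zero_of_le _ hk, map_zero]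

theorem apply_evalCoeffs (h : IsPencilKernel a₁ a₂ v d) (t : K) :
    a₂ (evalCoeffs v d t) + t • a₁ (evalCoeffs v d t) = 0 := by
  have telescope : ∀ N, ∑ k ∈ Finset.range (N + 1), t ^ k • (a₂ (v k) + t • a₁ (v k)) =
      t ^ (N + 1) • a₁ (v N) := by
    intro N
    induction N with
    | zero => simp [h.apply_zero, pow_succ]
    | succ N ih =>
      rw [Finset.sum_range_succ, ih, h.apply_succ, smul_add, smul_smul, ← pow_succ, smul_neg,
        add_neg_cancel_left]
  rcases d with _ | N
  · simp [evalCoeffs]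
  calc _ = ∑ k ∈ Finset.range (N + 1), t ^ k • (a₂ (v k) + t • a₁ (v k)) := by
        simp only [evalCoeffs, map_sum, map_smul, Finset.smul_sum, ← Finset.sum_add_distrib,
          smul_add, smul_comm t]
    _ = 0 := by rw [telescope, h.apply_fst_eq_zero le_rfl, smul_zero]

theorem map_fst_span_le (h : IsPencilKernel a₁ a₂ v d) :
    (span K (Set.range v)).map a₁ ≤ (span K (Set.range v)).map a₂ := by
  rw [map_span, map_span, span_le]
  rintro _ ⟨_, ⟨k, rfl⟩, rfl⟩
  rw [← neg_neg (a₁ (v k)), ← h.apply_succ]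
  exact neg_mem (subset_span ⟨v (k + 1), ⟨k + 1, rfl⟩, rfl⟩)

theorem apply_eq_zero_of_apply_fst_eq_zero {m : ℕ} (h : IsPencilKernel a₁ a₂ v d)
    (C : Fin (m + 1) → N →ₗ[K] M)
    (hC : ∀ q : Fin m, ∀ k, C q.succ (a₂ (v k)) = C q.castSucc (a₁ (v k)))
    (hlast : ∀ k, C (Fin.last m) (a₁ (v k)) = 0) (q : Fin (m + 1)) (k : ℕ) :
    C q (a₂ (v k)) = 0 := by
  induction k generalizing q with
  | zero => rw [h.apply_zero, map_zero]
  | succ k ih =>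
    rw [h.apply_succ, map_neg, neg_eq_zero]
    induction q using Fin.lastCases with
    | last => exact hlast k
    | cast q => rw [← hC q k, ih]

end IsPencilKernel

theorem exists_isPencilKernel_ne_zero [FiniteDimensional K M] [FiniteDimensional K N]
    (a₁ a₂ : M →ₗ[K] N) (h : finrank K N < finrank K M) :
    ∃ v d, IsPencilKernel a₁ a₂ v d ∧ v ≠ 0 := by
  set D := finrank K N
  set pad : (Fin (D + 1) → M) →ₗ[K] ℕ → M :=
    LinearMap.pi fun k ↦ if hk : k < D + 1 then LinearMap.proj ⟨k, hk⟩ else 0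
  have pad_lt (w : Fin (D + 1) → M) (k : Fin (D + 1)) : pad w k = w k := by
    simp [pad, Nat.le_of_lt_succ k.2]
  have pad_ge (w : Fin (D + 1) → M) (k : ℕ) (hk : D + 1 ≤ k) : pad w k = 0 := by
    simp [pad, show ¬ k ≤ D by omega]
  -- the coefficients of `(a₂ + t a₁) x(t)` for `x(t)` of degree at most `D`
  set Φ : (Fin (D + 1) → M) →ₗ[K] N × (Fin (D + 1) → N) :=
    (a₂ ∘ₗ LinearMap.proj 0 ∘ₗ pad).prod (LinearMap.pi fun k : Fin (D + 1) ↦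
      a₁ ∘ₗ LinearMap.proj k.1 ∘ₗ pad + a₂ ∘ₗ LinearMap.proj (k.1 + 1) ∘ₗ pad)
  have hdim : finrank K (N × (Fin (D + 1) → N)) < finrank K (Fin (D + 1) → M) := by
    simp only [finrank_prod, finrank_pi_fintype, Finset.sum_const, Finset.card_univ,
      Fintype.card_fin, smul_eq_mul]
    nlinarith
  obtain ⟨w, hw, hw0⟩ :=
    (Submodule.ne_bot_iff _).1 (LinearMap.ker_ne_bot_of_finrank_lt (f := Φ) hdim)
  have hΦ := LinearMap.mem_ker.1 hw
  refine ⟨pad w, D + 1, ⟨?_, fun k ↦ ?_, fun k hk ↦ pad_ge w k hk⟩, fun h0 ↦ hw0 ?_⟩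
  · exact congrArg Prod.fst hΦ
  · by_cases hk : k < D + 1
    · exact eq_neg_of_add_eq_zero_left
        ((add_comm _ _).trans (congrFun (congrArg Prod.snd hΦ) ⟨k, hk⟩))
    · rw [pad_ge w k (by omega), pad_ge w (k + 1) (by omega), map_zero, map_zero, neg_zero]
  · funext k
    rw [← pad_lt w k, h0, Pi.zero_apply, Pi.zero_apply]

theorem exists_isPencilKernel_ne_zero_of_map_le [FiniteDimensional K M] [FiniteDimensional K N]
    {a₁ a₂ : M →ₗ[K] N} {S₀ : Submodule K M} {S₁ : Submodule K N} (h₁ : S₀.map a₁ ≤ S₁)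
    (h₂ : S₀.map a₂ ≤ S₁) (hlt : finrank K S₁ < finrank K S₀) :
    ∃ v d, IsPencilKernel a₁ a₂ v d ∧ v ≠ 0 := by
  obtain ⟨w, d, hw, hw0⟩ := exists_isPencilKernel_ne_zero
    (a₁.restrict fun x hx ↦ h₁ (mem_map_of_mem hx))
    (a₂.restrict fun x hx ↦ h₂ (mem_map_of_mem hx)) hlt
  refine ⟨fun k ↦ w k, d, ⟨?_, fun k ↦ ?_, fun k hk ↦ ?_⟩, fun h0 ↦ hw0 ?_⟩
  · exact congrArg Subtype.val hw.apply_zero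
  · exact congrArg Subtype.val (hw.apply_succ k)
  · exact congrArg Subtype.val (hw.eq_zero_of_le k hk)
  · funext k
    exact Subtype.ext (congrFun h0 k)

theorem exists_isPencilKernel_dualMap_ne_zero_of_map_le [FiniteDimensional K M]
    [FiniteDimensional K N] (hMN : finrank K M = finrank K N) {a₁ a₂ : M →ₗ[K] N}
    {S₀ : Submodule K M} {S₁ : Submodule K N} (h₁ : S₀.map a₁ ≤ S₁) (h₂ : S₀.map a₂ ≤ S₁)
    (hlt : finrank K S₁ < finrank K S₀) :
    ∃ ρ d, IsPencilKernel a₁.dualMap a₂.dualMap ρ d ∧ ρ ≠ 0 := by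
  have dualMap_le {a : M →ₗ[K] N} (h : S₀.map a ≤ S₁) :
      S₁.dualAnnihilator.map a.dualMap ≤ S₀.dualAnnihilator :=
    (dualAnnihilator_map_dualMap_le S₁ a).trans (dualAnnihilator_anti (map_le_iff_le_comap.1 h))
  refine exists_isPencilKernel_ne_zero_of_map_le (dualMap_le h₁) (dualMap_le h₂) ?_
  have := Subspace.finrank_add_finrank_dualAnnihilator_eq S₀
  have := Subspace.finrank_add_finrank_dualAnnihilator_eq S₁
  omega

structure IsMinimalPencilKernel (a₁ a₂ : M →ₗ[K] N) (v : ℕ → M) (d : ℕ) : Prop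
    extends IsPencilKernel a₁ a₂ v d where
  ne_zero : v ≠ 0
  eq_zero_of_lt : ∀ w d', IsPencilKernel a₁ a₂ w d' → d' < d → w = 0

theorem exists_isMinimalPencilKernel {a₁ a₂ : M →ₗ[K] N}
    (h : ∃ v d, IsPencilKernel a₁ a₂ v d ∧ v ≠ 0) : ∃ v d, IsMinimalPencilKernel a₁ a₂ v d := by
  classical
  have h' : ∃ d, ∃ v, IsPencilKernel a₁ a₂ v d ∧ v ≠ 0 := by
    obtain ⟨v, d, hv⟩ := h
    exact ⟨d, v, hv⟩
  obtain ⟨v, hv, hv0⟩ := Nat.find_spec h'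
  exact ⟨v, Nat.find h', hv, hv0, fun w d' hw hd' ↦ by
    by_contra hw0
    exact Nat.find_min h' hd' ⟨w, hw, hw0⟩⟩

namespace IsMinimalPencilKernel

variable {a₁ a₂ : M →ₗ[K] N} {v : ℕ → M} {d : ℕ}

theorem pos (h : IsMinimalPencilKernel a₁ a₂ v d) : 0 < d := by
  refine Nat.pos_of_ne_zero fun hd ↦ h.ne_zero ?_
  funext k
  exact h.eq_zero_of_le k (by omega)

theorem apply_zero_ne_zero (h : IsMinimalPencilKernel a₁ a₂ v d) : v 0 ≠ 0 := by
  intro h0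
  have hshift : IsPencilKernel a₁ a₂ (fun k ↦ v (k + 1)) (d - 1) :=
    ⟨by rw [h.apply_succ, h0, map_zero, neg_zero], fun k ↦ h.apply_succ (k + 1),
      fun k hk ↦ h.eq_zero_of_le (k + 1) (by omega)⟩
  refine h.ne_zero (funext fun k ↦ ?_)
  rcases k with _ | k
  · exact h0
  · exact congrFun (h.eq_zero_of_lt _ _ hshift (by have := h.pos; omega)) k

theorem finrank_map_lt [FiniteDimensional K M] (h : IsMinimalPencilKernel a₁ a₂ v d) :
    finrank K ((span K (Set.range v)).map a₂) < finrank K (span K (Set.range v)) := by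
  set T := span K (Set.range v)
  have hker : LinearMap.ker (a₂.domRestrict T) ≠ ⊥ := by
    refine (Submodule.ne_bot_iff _).2 ⟨⟨v 0, subset_span ⟨0, rfl⟩⟩, h.apply_zero, ?_⟩
    exact fun h0 ↦ h.apply_zero_ne_zero (congrArg Subtype.val h0)
  have := (a₂.domRestrict T).finrank_range_add_finrank_ker
  rw [LinearMap.range_domRestrict] at this
  have := Submodule.finrank_eq_zero.not.2 hker
  omega

theorem apply_apply_fst_eq_zero (h : IsMinimalPencilKernel a₁ a₂ v d) (g g' : N →ₗ[K] M)
    (hg : ∀ k, g (a₂ (v k)) = g' (a₁ (v k)))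
    (hg' : ∀ k, a₂ (g (a₁ (v k))) = a₁ (g' (a₁ (v k)))) (k : ℕ) : g (a₁ (v k)) = 0 := by
  have hw : IsPencilKernel a₁ a₂ (fun k ↦ g (a₁ (v k))) (d - 1) := by
    refine ⟨?_, fun k ↦ ?_, fun k hk ↦ ?_⟩
    · rw [hg', ← hg, h.apply_zero, map_zero, map_zero]
    · rw [hg', ← hg, h.apply_succ, map_neg, map_neg]
    · rw [h.apply_fst_eq_zero (by omega), map_zero]
  exact congrFun (h.eq_zero_of_lt _ _ hw (by have := h.pos; omega)) k

theorem apply_eq_zero {m : ℕ} (h : IsMinimalPencilKernel a₁ a₂ v d)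
    (C : Fin (m + 2) → N →ₗ[K] M)
    (hC : ∀ q : Fin (m + 1), ∀ k, C q.succ (a₂ (v k)) = C q.castSucc (a₁ (v k)))
    (hA : ∀ k, a₂ (C (Fin.last (m + 1)) (a₁ (v k))) = a₁ (C (Fin.last m).castSucc (a₁ (v k))))
    (q : Fin (m + 2)) (k : ℕ) : C q (a₂ (v k)) = 0 :=
  h.apply_eq_zero_of_apply_fst_eq_zero C hC
    (h.apply_apply_fst_eq_zero _ _ (hC (Fin.last m)) hA) q k

end IsMinimalPencilKernel

theorem map_dualCoannihilator_le_of_map_dualMap_le {a : M →ₗ[K] N}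
    {Ξ₀ : Submodule K (Dual K M)} {Ξ₁ : Submodule K (Dual K N)} (h : Ξ₁.map a.dualMap ≤ Ξ₀) :
    Ξ₀.dualCoannihilator.map a ≤ Ξ₁.dualCoannihilator := by
  rintro _ ⟨x, hx, rfl⟩
  rw [SetLike.mem_coe, mem_dualCoannihilator] at hx
  rw [mem_dualCoannihilator]
  exact fun φ hφ ↦ hx _ (h (mem_map_of_mem hφ))

theorem pencil_apply_swap {a₁ a₂ : M →ₗ[K] N} (g : N →ₗ[K] M) {t : K} {x : M}
    {φ : Dual K N} (hx : a₂ x + t • a₁ x = 0) (hφ : a₂.dualMap φ + t • a₁.dualMap φ = 0) :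
    φ (a₂ (g (a₁ x))) = φ (a₁ (g (a₂ x))) := by
  have hφ' : φ (a₂ (g (a₁ x))) = -t * φ (a₁ (g (a₁ x))) := by
    have := congr($hφ (g (a₁ x)))
    simp only [LinearMap.add_apply, LinearMap.smul_apply, LinearMap.dualMap_apply,
      smul_eq_mul, LinearMap.zero_apply] at this
    linear_combination this
  rw [hφ', eq_neg_of_add_eq_zero_left hx]
  simp

end Pencil

theorem Dual.eq_zero_of_apply_eq_zero {W : Type*} [AddCommGroup W] [Module K W]
    (hW : finrank K W = 1) {w : W} (hw : w ≠ 0) {ψ : Dual K W} (h : ψ w = 0) : ψ = 0 := by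
  ext u
  obtain ⟨μ, rfl⟩ := (finrank_eq_one_iff_of_nonzero' w hw).1 hW u
  simp [h]

section Framed

variable {V₀ V₁ W : Type*} [AddCommGroup V₀] [Module K V₀] [AddCommGroup V₁] [Module K V₁]
  [AddCommGroup W] [Module K W] {m : ℕ} {A₁ A₂ : V₀ →ₗ[K] V₁} {C : Fin (m + 2) → V₁ →ₗ[K] V₀}
  {e : V₀ →ₗ[K] W} {f : Fin (m + 1) → W →ₗ[K] V₀}

def IsSubrep {ι : Type*} (A₁ A₂ : V₀ →ₗ[K] V₁) (C : ι → V₁ →ₗ[K] V₀) (T₀ : Submodule K V₀)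
    (T₁ : Submodule K V₁) : Prop :=
  T₀.map A₁ ≤ T₁ ∧ T₀.map A₂ ≤ T₁ ∧ ∀ q, T₁.map (C q) ≤ T₀

theorem framing_apply_eq_sub
    (hQ1b : ∀ q : Fin (m + 1), C q.succ ∘ₗ A₂ = C q.castSucc ∘ₗ A₁ + f q ∘ₗ e)
    {q : Fin (m + 1)} (x : V₀) : f q (e x) = C q.succ (A₂ x) - C q.castSucc (A₁ x) := by
  rw [← LinearMap.comp_apply, ← LinearMap.comp_apply, hQ1b]
  simp

theorem range_le_of_isSubrep (hW : finrank K W = 1)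
    (hQ1b : ∀ q : Fin (m + 1), C q.succ ∘ₗ A₂ = C q.castSucc ∘ₗ A₁ + f q ∘ₗ e)
    {T₀ : Submodule K V₀} {T₁ : Submodule K V₁} (hT : IsSubrep A₁ A₂ C T₀ T₁)
    (he : ¬ T₀ ≤ LinearMap.ker e) (q : Fin (m + 1)) : LinearMap.range (f q) ≤ T₀ := by
  obtain ⟨x, hx, hex⟩ := SetLike.not_le_iff_exists.1 he
  rintro _ ⟨u, rfl⟩
  obtain ⟨μ, rfl⟩ := (finrank_eq_one_iff_of_nonzero' (e x) hex).1 hW u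
  have mem (i : Fin (m + 2)) {A : V₀ →ₗ[K] V₁} (hA : T₀.map A ≤ T₁) : C i (A x) ∈ T₀ :=
    hT.2.2 i (mem_map_of_mem (hA (mem_map_of_mem hx)))
  rw [map_smul, framing_apply_eq_sub hQ1b]
  exact smul_mem _ _ (sub_mem (mem _ hT.2.1) (mem _ hT.1))

theorem finrank_le_finrank_of_isSubrep {c : ℕ} (hc : 1 ≤ c) (hW : finrank K W = 1)
    (hQ1b : ∀ q : Fin (m + 1), C q.succ ∘ₗ A₂ = C q.castSucc ∘ₗ A₁ + f q ∘ₗ e)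
    (hss : ∀ (S₀ : Submodule K V₀) (S₁ : Submodule K V₁),
      S₀.map A₁ ≤ S₁ → S₀.map A₂ ≤ S₁ →
      (∀ q : Fin (m + 2), S₁.map (C q) ≤ S₀) →
      ((S₀ ≤ LinearMap.ker e →
          (2 * c : ℤ) * (finrank K S₀ : ℤ) + (1 - 2 * c) * (finrank K S₁ : ℤ) ≤ 0) ∧
       ((∀ q, LinearMap.range (f q) ≤ S₀) →
          (2 * c : ℤ) * (finrank K S₀ : ℤ) + (1 - 2 * c) * (finrank K S₁ : ℤ) ≤ c)))
    (T₀ : Submodule K V₀) (T₁ : Submodule K V₁) (hT : IsSubrep A₁ A₂ C T₀ T₁) :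
    finrank K T₀ ≤ finrank K T₁ := by
  obtain ⟨hker, hrange⟩ := hss T₀ T₁ hT.1 hT.2.1 hT.2.2
  have hθ : (2 * c : ℤ) * finrank K T₀ + (1 - 2 * c) * finrank K T₁ ≤ c := by
    by_cases he : T₀ ≤ LinearMap.ker e
    · linarith [hker he]
    · exact hrange (range_le_of_isSubrep hW hQ1b hT he)
  by_contra! hlt
  have : (finrank K T₁ : ℤ) + 1 ≤ finrank K T₀ := by exact_mod_cast hlt
  nlinarith

theorem IsMinimalPencilKernel.exists_apply_ne_zero {v : ℕ → V₀} {d : ℕ}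
    (hQ1a : ∀ q : Fin (m + 1), A₂ ∘ₗ C q.succ = A₁ ∘ₗ C q.castSucc)
    (hQ1b : ∀ q : Fin (m + 1), C q.succ ∘ₗ A₂ = C q.castSucc ∘ₗ A₁ + f q ∘ₗ e)
    (hΛ : ∀ T₀ T₁, IsSubrep A₁ A₂ C T₀ T₁ → finrank K T₀ ≤ finrank K T₁)
    [FiniteDimensional K V₀] (hv : IsMinimalPencilKernel A₁ A₂ v d) : ∃ k, e (v k) ≠ 0 := by
  by_contra! he
  have hC := hv.apply_eq_zero C (fun q k ↦ by simpa [he] using congr($(hQ1b q) (v k)))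
    (fun k ↦ congr($(hQ1a (Fin.last m)) (A₁ (v k))))
  set T := span K (Set.range v)
  have hT : IsSubrep A₁ A₂ C T (T.map A₂) := by
    refine ⟨hv.map_fst_span_le, le_rfl, fun q ↦ ?_⟩
    rw [map_span, map_span, span_le]
    rintro _ ⟨_, ⟨_, ⟨k, rfl⟩, rfl⟩, rfl⟩
    simp [hC]
  exact (hΛ _ _ hT).not_gt hv.finrank_map_lt

theorem IsMinimalPencilKernel.exists_comp_ne_zero {ρ : ℕ → Dual K V₁} {d : ℕ}
    [FiniteDimensional K V₀] [FiniteDimensional K V₁] (hV : finrank K V₀ = finrank K V₁)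
    (hQ1a : ∀ q : Fin (m + 1), A₂ ∘ₗ C q.succ = A₁ ∘ₗ C q.castSucc)
    (hQ1b : ∀ q : Fin (m + 1), C q.succ ∘ₗ A₂ = C q.castSucc ∘ₗ A₁ + f q ∘ₗ e)
    (hΛ : ∀ T₀ T₁, IsSubrep A₁ A₂ C T₀ T₁ → finrank K T₀ ≤ finrank K T₁)
    (hρ : IsMinimalPencilKernel A₁.dualMap A₂.dualMap ρ d) :
    ∃ q j, (ρ j).comp (A₁ ∘ₗ f q) ≠ 0 := by
  by_contra! hf
  have hC := hρ.apply_eq_zero (fun q ↦ (C q).dualMap)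
    (fun q k ↦ LinearMap.ext fun y ↦ congr(ρ k $(congr($(hQ1a q) y))))
    (fun k ↦ LinearMap.ext fun x ↦ by
      have hx := congr($(hQ1b (Fin.last m)) x)
      have hfx : ρ k (A₁ (f (Fin.last m) (e x))) = 0 := congr($(hf (Fin.last m) k) (e x))
      simp only [LinearMap.comp_apply, LinearMap.add_apply, Fin.succ_last] at hx
      simp only [LinearMap.dualMap_apply]
      rw [hx, map_add, map_add, hfx, add_zero])
  have hdrop := hρ.finrank_map_lt
  set Ξ := span K (Set.range ρ)
  have hT : IsSubrep A₁ A₂ C (Ξ.map A₂.dualMap).dualCoannihilator Ξ.dualCoannihilator := by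
    refine ⟨map_dualCoannihilator_le_of_map_dualMap_le hρ.map_fst_span_le,
      map_dualCoannihilator_le_of_map_dualMap_le le_rfl,
      fun q ↦ map_dualCoannihilator_le_of_map_dualMap_le ?_⟩
    rw [map_span, map_span, span_le]
    rintro _ ⟨_, ⟨_, ⟨k, rfl⟩, rfl⟩, rfl⟩
    simp [hC]
  have := hΛ _ _ hT
  have := Subspace.finrank_add_finrank_dualCoannihilator_eq Ξ
  have := Subspace.finrank_add_finrank_dualCoannihilator_eq (Ξ.map A₂.dualMap)
  omega

theorem IsPencilKernel.comp_eq_zero [Infinite K] {v : ℕ → V₀} {ρ : ℕ → Dual K V₁} {d δ : ℕ}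
    (hW : finrank K W = 1)
    (hQ1a : ∀ q : Fin (m + 1), A₂ ∘ₗ C q.succ = A₁ ∘ₗ C q.castSucc)
    (hQ1b : ∀ q : Fin (m + 1), C q.succ ∘ₗ A₂ = C q.castSucc ∘ₗ A₁ + f q ∘ₗ e)
    (hv : IsPencilKernel A₁ A₂ v d) (he : ∃ k, e (v k) ≠ 0)
    (hρ : IsPencilKernel A₁.dualMap A₂.dualMap ρ δ) (q : Fin (m + 1)) (j : ℕ) :
    (ρ j).comp (A₁ ∘ₗ f q) = 0 := by
  have hpoint (t : K) : evalCoeffs ρ δ t (A₁ (f q (e (evalCoeffs v d t)))) = 0 := by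
    rw [framing_apply_eq_sub hQ1b, map_sub, map_sub, ← LinearMap.comp_apply A₁ (C q.castSucc),
      ← hQ1a q, LinearMap.comp_apply,
      pencil_apply_swap _ (hv.apply_evalCoeffs t) (hρ.apply_evalCoeffs t), sub_self]
  have hfin : {t : K | e (evalCoeffs v d t) = 0}.Finite := by
    by_contra hinf
    obtain ⟨k, hk⟩ := he
    refine hk (congrFun (eq_zero_of_infinite_evalCoeffs_eq_zero (K := K) (v := fun k ↦ e (v k))
      (fun k hk ↦ by rw [hv.eq_zero_of_le k hk, map_zero]) ?_) k)
    simpa using hinf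
  refine congrFun (eq_zero_of_infinite_evalCoeffs_eq_zero (d := δ)
    (v := fun j ↦ (A₁ ∘ₗ f q).dualMap (ρ j)) (fun j hj ↦ by rw [hρ.eq_zero_of_le j hj, map_zero])
    (hfin.infinite_compl.mono fun t ht ↦ ?_)) j
  rw [Set.mem_ofPred_eq, ← map_evalCoeffs]
  exact Dual.eq_zero_of_apply_eq_zero hW ht (hpoint t)

theorem finrank_le_finrank_of_map_le [Infinite K] [FiniteDimensional K V₀]
    [FiniteDimensional K V₁] (hV : finrank K V₀ = finrank K V₁) (hW : finrank K W = 1)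
    (hQ1a : ∀ q : Fin (m + 1), A₂ ∘ₗ C q.succ = A₁ ∘ₗ C q.castSucc)
    (hQ1b : ∀ q : Fin (m + 1), C q.succ ∘ₗ A₂ = C q.castSucc ∘ₗ A₁ + f q ∘ₗ e)
    (hΛ : ∀ T₀ T₁, IsSubrep A₁ A₂ C T₀ T₁ → finrank K T₀ ≤ finrank K T₁)
    {S₀ : Submodule K V₀} {S₁ : Submodule K V₁} (h₁ : S₀.map A₁ ≤ S₁) (h₂ : S₀.map A₂ ≤ S₁) :
    finrank K S₀ ≤ finrank K S₁ := by
  by_contra! hlt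
  obtain ⟨v, d, hv⟩ :=
    exists_isMinimalPencilKernel (exists_isPencilKernel_ne_zero_of_map_le h₁ h₂ hlt)
  obtain ⟨ρ, δ, hρ⟩ :=
    exists_isMinimalPencilKernel (exists_isPencilKernel_dualMap_ne_zero_of_map_le hV h₁ h₂ hlt)
  obtain ⟨q, j, hqj⟩ := hρ.exists_comp_ne_zero hV hQ1a hQ1b hΛ
  exact hqj (hv.comp_eq_zero hW hQ1a hQ1b (hv.exists_apply_ne_zero hQ1a hQ1b hΛ)
    hρ.toIsPencilKernel q j)

end Framed

theorem div_le_half_of_le {c s₀ s₁ : ℕ} (hc : 1 ≤ c) (hs : s₀ ≤ s₁) (hpos : s₀ + s₁ ≠ 0) :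
    ((2 * c : ℝ) * s₀ + (1 - 2 * c) * s₁) / (s₀ + s₁) ≤ 1 / 2 := by
  have hpos' : (0 : ℝ) < s₀ + s₁ := by exact_mod_cast Nat.pos_of_ne_zero hpos
  have hc' : (1 : ℝ) ≤ c := by exact_mod_cast hc
  have hs' : (s₀ : ℝ) ≤ s₁ := by exact_mod_cast hs
  rw [div_le_div_iff₀ hpos' two_pos]
  nlinarith

/-- (Proposition 4.2) If (A₁,A₂;C₁,…,C_n;e;f₁,…,f_{n−1}) is a θ_c-semistable
(c,c)-dimensional framed representation of Λ_n, then (A₁,A₂) is a θ_c-semistable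
(c,c)-dimensional representation of the 2-Kronecker quiver. -/
theorem stmt_5 (n c : ℕ) (hn : 2 ≤ n) (hc : 1 ≤ c)
    (V₀ V₁ W : Type) [AddCommGroup V₀] [Module ℂ V₀] [FiniteDimensional ℂ V₀]
    [AddCommGroup V₁] [Module ℂ V₁] [FiniteDimensional ℂ V₁]
    [AddCommGroup W] [Module ℂ W]
    (hV₀ : finrank ℂ V₀ = c) (hV₁ : finrank ℂ V₁ = c) (hW : finrank ℂ W = 1)
    (A₁ A₂ : V₀ →ₗ[ℂ] V₁)
    (C : Fin n → (V₁ →ₗ[ℂ] V₀))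
    (e : V₀ →ₗ[ℂ] W) (f : Fin (n - 1) → (W →ₗ[ℂ] V₀))
    -- the relations (Q1)
    (hQ1a : ∀ q : Fin (n - 1),
      A₂ ∘ₗ C ⟨q.1 + 1, by have := q.2; omega⟩ = A₁ ∘ₗ C ⟨q.1, by have := q.2; omega⟩)
    (hQ1b : ∀ q : Fin (n - 1),
      C ⟨q.1 + 1, by have := q.2; omega⟩ ∘ₗ A₂ =
        C ⟨q.1, by have := q.2; omega⟩ ∘ₗ A₁ + f q ∘ₗ e)
    -- θ_c-semistability as a representation of Λ_n
    (hss : ∀ (S₀ : Submodule ℂ V₀) (S₁ : Submodule ℂ V₁),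
      S₀.map A₁ ≤ S₁ → S₀.map A₂ ≤ S₁ →
      (∀ q : Fin n, S₁.map (C q) ≤ S₀) →
      ((S₀ ≤ LinearMap.ker e →
          (2 * c : ℤ) * (finrank ℂ S₀ : ℤ) + (1 - 2 * c) * (finrank ℂ S₁ : ℤ) ≤ 0) ∧
       ((∀ q, LinearMap.range (f q) ≤ S₀) →
          (2 * c : ℤ) * (finrank ℂ S₀ : ℤ) + (1 - 2 * c) * (finrank ℂ S₁ : ℤ) ≤ c))) :
    -- θ_c-semistability of (A₁,A₂) as a representation of the Kronecker quiver
    ∀ (S₀ : Submodule ℂ V₀) (S₁ : Submodule ℂ V₁),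
      S₀.map A₁ ≤ S₁ → S₀.map A₂ ≤ S₁ →
      ¬(S₀ = ⊥ ∧ S₁ = ⊥) → ¬(S₀ = ⊤ ∧ S₁ = ⊤) →
      ((2 * c : ℝ) * (finrank ℂ S₀ : ℝ) + (1 - 2 * c) * (finrank ℂ S₁ : ℝ)) /
        ((finrank ℂ S₀ : ℝ) + (finrank ℂ S₁ : ℝ)) ≤ 1 / 2 := by
  intro S₀ S₁ h₁ h₂ hne _
  obtain ⟨m, rfl⟩ : ∃ m, n = m + 2 := ⟨n - 2, by omega⟩
  have hΛ := finrank_le_finrank_of_isSubrep hc hW hQ1b hss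
  refine div_le_half_of_le hc
    (finrank_le_finrank_of_map_le (hV₀.trans hV₁.symm) hW hQ1a hQ1b hΛ h₁ h₂) fun h0 ↦ hne ?_
  exact ⟨finrank_eq_zero.1 (by omega), finrank_eq_zero.1 (by omega)⟩
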